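/- Let k = λ₁B₁ + λ₂B₂ + ... + λ_lB_l be a finite convex combination (λ_j ∈ [0,1], Σλ_j = 1) of functions B_j ∈ H^∞ with |B_j| = 1 almost everywhere on ∂𝔻 and B_j(0) = 0 (e.g. Blaschke products vanishing at 0). Then for every u ∈ H², ‖u‖² − ‖T_{k̄} u‖² ≥ |u(0)|², where norms are L² norms on ∂𝔻. -/

import Mathlib

open MeasureTheory Complex Real ContinuousLinearMap
open scoped InnerProductSpace

noncomputable section

namespace SpectralArea

instance : Fact ((0:ℝ) < 2 * Real.pi) := ⟨by positivity⟩
instance : Fact ((1:ENNReal) ≤ ⊤) := ⟨le_top⟩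

/-- The unit circle `∂𝔻`, parametrized by angle, i.e. `ℝ / 2πℤ`. -/
abbrev Circle2pi : Type := AddCircle (2 * Real.pi)

/-- Normalized arclength measure `dθ/(2π)` on the circle. -/
abbrev haar : Measure Circle2pi := AddCircle.haarAddCircle

/-- `L²(∂𝔻)` with respect to normalized arclength measure. -/
abbrev L2 : Type := Lp ℂ 2 haar

/-- `L^∞(∂𝔻)`. -/
abbrev Linf : Type := Lp ℂ ⊤ haar

/-- The Hardy space `H²`: the subspace of `L²` of functions whose negative Fourier
coefficients vanish. -/
def Hardy : Submodule ℂ L2 where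
  carrier := {u | ∀ n : ℤ, n < 0 → fourierCoeff (u : Circle2pi → ℂ) n = 0}
  add_mem' := by
    intro u v hu hv n hn
    rw [← fourierBasis_repr, map_add, lp.coeFn_add, Pi.add_apply,
      fourierBasis_repr, fourierBasis_repr, hu n hn, hv n hn, add_zero]
  zero_mem' := by
    intro n hn
    rw [← fourierBasis_repr, map_zero, lp.coeFn_zero, Pi.zero_apply]
  smul_mem' := by
    intro c u hu n hn
    rw [← fourierBasis_repr, _root_.map_smul, lp.coeFn_smul, Pi.smul_apply,
      fourierBasis_repr, hu n hn, smul_zero]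

lemma hardy_isClosed : IsClosed (Hardy : Set L2) := by
  have h : (Hardy : Set L2) =
      ⋂ n ∈ {n : ℤ | n < 0}, ((innerSL ℂ (fourierBasis n)) ⁻¹' {(0 : ℂ)}) := by
    ext u
    simp only [Set.mem_iInter, Set.mem_preimage, Set.mem_setOf_eq, Set.mem_singleton_iff,
      innerSL_apply_apply]
    constructor
    · intro hu n hn
      rw [← fourierBasis.repr_apply_apply u n, fourierBasis_repr]
      exact hu n hn
    · intro hu n hn
      rw [← fourierBasis_repr, fourierBasis.repr_apply_apply u n]
      exact hu n hn
  rw [h]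
  exact isClosed_biInter fun n _ =>
    isClosed_singleton.preimage (innerSL ℂ (fourierBasis n)).continuous

/-- `H²` is a complete (hence closed) subspace of `L²`. -/
instance : CompleteSpace Hardy := hardy_isClosed.completeSpace_coe

/-- The orthogonal projection `P : L² → H²`. -/
def proj : L2 →L[ℂ] Hardy := Hardy.orthogonalProjectionOnto

/-- Pointwise multiplication by an `L^∞` function, as a bounded operator on `L²`. -/
def mulL (φ : Linf) : L2 →L[ℂ] L2 :=
  LinearMap.mkContinuous
    { toFun := fun u => ((Lp.memLp u).smul (r := 2) (Lp.memLp φ)).toLp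
        ((φ : Circle2pi → ℂ) • (u : Circle2pi → ℂ))
      map_add' := by
        intro u v
        rw [← MemLp.toLp_add, MemLp.toLp_eq_toLp_iff]
        filter_upwards [Lp.coeFn_add u v] with x hx
        simp only [Pi.mul_apply, Pi.smul_apply, smul_eq_mul, hx, Pi.add_apply, mul_add]
      map_smul' := by
        intro c u
        rw [RingHom.id_apply, ← MemLp.toLp_const_smul, MemLp.toLp_eq_toLp_iff]
        filter_upwards [Lp.coeFn_smul c u] with x hx
        simp only [Pi.mul_apply, Pi.smul_apply, smul_eq_mul, hx]
        ring }
    ‖φ‖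
    (by
      intro u
      simp only [LinearMap.coe_mk, AddHom.coe_mk]
      rw [Lp.norm_toLp]
      calc (eLpNorm ((φ : Circle2pi → ℂ) • (u : Circle2pi → ℂ)) 2 haar).toReal
          ≤ (eLpNorm (φ : Circle2pi → ℂ) ⊤ haar * eLpNorm (u : Circle2pi → ℂ) 2 haar).toReal := by
            apply ENNReal.toReal_mono
              (ENNReal.mul_ne_top (Lp.eLpNorm_ne_top φ) (Lp.eLpNorm_ne_top u))
            exact eLpNorm_smul_le_mul_eLpNorm (Lp.aestronglyMeasurable u)
              (Lp.aestronglyMeasurable φ)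
        _ = ‖φ‖ * ‖u‖ := by
            rw [ENNReal.toReal_mul, Lp.norm_def, Lp.norm_def])

/-- Complex conjugation on `L^p` of the circle. -/
def conjLp {p : ENNReal} (f : Lp ℂ p haar) : Lp ℂ p haar :=
  Complex.conjLIE.lipschitz.compLp (map_zero Complex.conjLIE) f

/-- `f ↦ (θ ↦ conj (f (-θ)))`; on boundary values, this is `k(z) = conj (h (z̄))`. -/
def conjReflect (h : Linf) : Linf :=
  conjLp (Lp.compMeasurePreserving (fun θ : Circle2pi => -θ)
    (Measure.measurePreserving_neg haar) h)

/-- An `L^∞` function is in `L²` (the measure is finite). -/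
def toL2 (f : Linf) : L2 := ((Lp.memLp f).mono_exponent le_top).toLp f

/-- Membership in `H^∞`: a bounded function whose negative Fourier coefficients vanish
(i.e. the boundary value of a bounded analytic function on `𝔻`). -/
def MemHinf (f : Linf) : Prop := ∀ n : ℤ, n < 0 → fourierCoeff (f : Circle2pi → ℂ) n = 0

lemma fourierCoeff_congr_ae {f g : Circle2pi → ℂ} (h : f =ᵐ[haar] g) (n : ℤ) :
    fourierCoeff f n = fourierCoeff g n := by
  simp only [fourierCoeff]
  exact integral_congr_ae (by filter_upwards [h] with x hx; rw [hx])

lemma toL2_mem_Hardy {f : Linf} (hf : MemHinf f) : toL2 f ∈ Hardy := fun n hn => by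
  have h : (toL2 f : Circle2pi → ℂ) =ᵐ[haar] (f : Circle2pi → ℂ) := MemLp.coeFn_toLp _
  rw [fourierCoeff_congr_ae h n]
  exact hf n hn

/-- The Toeplitz operator `T_φ : H² → H²`, `T_φ u = P (φ u)`. -/
def Toeplitz (φ : Linf) : Hardy →L[ℂ] Hardy := proj ∘L mulL φ ∘L Hardy.subtypeL

/-- The Toeplitz operator viewed as acting on `L²` (precompose with inclusion,
postcompose with inclusion): `u ↦ P (φ u)` as an element of `L²`. -/
def ToeplitzL2 (φ : Linf) : L2 →L[ℂ] L2 := Hardy.subtypeL ∘L proj ∘L mulL φ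

/-- The unitary `U` on `L²`: `(U h)(z) = z̄ h(z̄)`, in angle coordinates
`(U h)(θ) = e^{-iθ} h(-θ)`. -/
def Umap : L2 →L[ℂ] L2 :=
  mulL (fourierLp ⊤ (-1)) ∘L
    (Lp.compMeasurePreservingₗᵢ ℂ (fun θ : Circle2pi => -θ)
      (Measure.measurePreserving_neg haar)).toContinuousLinearMap

/-- The Hankel operator `H_φ = U (I - P) M_φ`, viewed on all of `L²`. -/
def Hankel (φ : Linf) : L2 →L[ℂ] L2 :=
  Umap ∘L (ContinuousLinearMap.id ℂ L2 - Hardy.subtypeL ∘L proj) ∘L mulL φ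

/-- The self-commutator `[T*, T] = T*T - TT*`. -/
def selfCommutator (T : Hardy →L[ℂ] Hardy) : Hardy →L[ℂ] Hardy :=
  adjoint T ∘L T - T ∘L adjoint T


section Aux

lemma Lp_coeFn_sum {ι : Type*} {p : ENNReal} (s : Finset ι) (f : ι → Lp ℂ p haar) :
    (((∑ i ∈ s, f i : Lp ℂ p haar)) : Circle2pi → ℂ) =ᵐ[haar] fun x => ∑ i ∈ s, (f i : Circle2pi → ℂ) x := by
  classical
  induction s using Finset.induction_on with
  | empty => simp only [Finset.sum_empty]; exact Lp.coeFn_zero ℂ p haar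
  | insert a s hnotmem ih =>
    rw [Finset.sum_insert hnotmem]
    filter_upwards [Lp.coeFn_add (f a) (∑ i ∈ s, f i), ih] with x hx hx2
    rw [hx, Finset.sum_insert hnotmem, Pi.add_apply, hx2]

lemma coeFn_conjLp {p : ENNReal} (f : Lp ℂ p haar) :
    ((conjLp f : Lp ℂ p haar) : Circle2pi → ℂ) =ᵐ[haar]
      fun x => (starRingEnd ℂ) ((f : Circle2pi → ℂ) x) := by
  have h := LipschitzWith.coeFn_compLp Complex.conjLIE.lipschitz (map_zero Complex.conjLIE) f
  filter_upwards [h] with x hx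
  simpa [conjLp] using hx

lemma coeFn_mulL (φ : Linf) (u : L2) :
    ((mulL φ u : L2) : Circle2pi → ℂ) =ᵐ[haar]
      fun x => (φ : Circle2pi → ℂ) x * (u : Circle2pi → ℂ) x := by
  have h : ((mulL φ u : L2) : Circle2pi → ℂ) =ᵐ[haar]
      (φ : Circle2pi → ℂ) • (u : Circle2pi → ℂ) :=
    MemLp.coeFn_toLp ((Lp.memLp u).smul (r := 2) (Lp.memLp φ))
  filter_upwards [h] with x hx
  rw [hx]
  simp

lemma coeFn_toL2 (f : Linf) :
    ((toL2 f : L2) : Circle2pi → ℂ) =ᵐ[haar] (f : Circle2pi → ℂ) := MemLp.coeFn_toLp _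

lemma fourierCoeff_conj (f : Circle2pi → ℂ) (n : ℤ) :
    fourierCoeff (fun x => (starRingEnd ℂ) (f x)) n
      = (starRingEnd ℂ) (fourierCoeff f (-n)) := by
  simp only [fourierCoeff, neg_neg]
  rw [← integral_conj]
  congr 1
  ext x
  simp [smul_eq_mul, map_mul, fourier_neg]

/-- `conj B` (as an `L²` function) is orthogonal to `H²` when `B ∈ H^∞` and `B(0) = 0`. -/
lemma inner_conjB_hardy {B : Linf} (hB : MemHinf B)
    (hB0 : fourierCoeff ((B : Linf) : Circle2pi → ℂ) 0 = 0)
    (h : L2) (hh : h ∈ Hardy) : ⟪toL2 (conjLp B), h⟫_ℂ = 0 := by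
  have hmap := fourierBasis.repr.inner_map_map (toL2 (conjLp B)) h
  rw [← hmap, lp.inner_eq_tsum]
  have hzero : ∀ n : ℤ, ⟪fourierBasis.repr (toL2 (conjLp B)) n, fourierBasis.repr h n⟫_ℂ = 0 := by
    intro n
    rcases lt_or_ge n 0 with hn | hn
    · rw [fourierBasis_repr h n, hh n hn]
      simp
    · have hw : fourierBasis.repr (toL2 (conjLp B)) n = 0 := by
        rw [fourierBasis_repr]
        have hae : ((toL2 (conjLp B) : L2) : Circle2pi → ℂ) =ᵐ[haar]
            fun x => (starRingEnd ℂ) ((B : Circle2pi → ℂ) x) :=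
          (coeFn_toL2 _).trans (coeFn_conjLp B)
        rw [fourierCoeff_congr_ae hae n, fourierCoeff_conj]
        rcases eq_or_lt_of_le hn with hn0 | hn0
        · rw [← hn0, neg_zero, hB0, map_zero]
        · rw [hB (-n) (by omega), map_zero]
      rw [hw]
      simp
  rw [tsum_congr hzero, tsum_zero]

lemma norm_toL2_conj_one {B : Linf} (hBmod : ∀ᵐ θ ∂haar, ‖(B : Circle2pi → ℂ) θ‖ = 1) :
    ‖toL2 (conjLp B)‖ = 1 := by
  rw [Lp.norm_def]
  have hae : ((toL2 (conjLp B) : L2) : Circle2pi → ℂ) =ᵐ[haar]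
      fun x => (starRingEnd ℂ) ((B : Circle2pi → ℂ) x) :=
    (coeFn_toL2 _).trans (coeFn_conjLp B)
  have : eLpNorm ((toL2 (conjLp B) : L2) : Circle2pi → ℂ) 2 haar
      = eLpNorm (fun _ : Circle2pi => (1 : ℂ)) 2 haar := by
    apply eLpNorm_congr_norm_ae
    filter_upwards [hae, hBmod] with x hx hx2
    rw [hx]
    simp [hx2]
  rw [this, eLpNorm_const (1 : ℂ) two_ne_zero (NeZero.ne haar)]
  simp

/-- Key estimate for a single inner function vanishing at 0. -/
lemma key_single (B : Linf) (hB : MemHinf B)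
    (hBmod : ∀ᵐ θ ∂haar, ‖(B : Circle2pi → ℂ) θ‖ = 1)
    (hB0 : fourierCoeff ((B : Linf) : Circle2pi → ℂ) 0 = 0) (u : Hardy) :
    ‖((Toeplitz (conjLp B) u : Hardy) : L2)‖ ^ 2 ≤
      ‖(u : L2)‖ ^ 2 - ‖fourierCoeff ((u : L2) : Circle2pi → ℂ) 0‖ ^ 2 := by
  set v : L2 := mulL (conjLp B) (u : L2) with hv
  have hvcoe : (v : Circle2pi → ℂ) =ᵐ[haar]
      fun x => (starRingEnd ℂ) ((B : Circle2pi → ℂ) x) * ((u : L2) : Circle2pi → ℂ) x := by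
    filter_upwards [coeFn_mulL (conjLp B) (u : L2), coeFn_conjLp B] with x hx hx2
    rw [hx, hx2]
  -- ‖v‖ = ‖u‖
  have hvnorm : ‖v‖ = ‖(u : L2)‖ := by
    rw [Lp.norm_def, Lp.norm_def]
    congr 1
    apply eLpNorm_congr_norm_ae
    filter_upwards [hvcoe, hBmod] with x hx hx2
    rw [hx]
    simp [norm_mul, hx2]
  -- Toeplitz applied
  have hT : ((Toeplitz (conjLp B) u : Hardy) : L2) = ((proj v : Hardy) : L2) := rfl
  set Pv : L2 := ((proj v : Hardy) : L2) with hPv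
  set q : L2 := v - Pv with hq
  -- Pythagoras
  have hinner : ⟪Pv, q⟫_ℂ = 0 := by
    have h0 : ⟪q, Pv⟫_ℂ = 0 :=
      Hardy.starProjection_inner_eq_zero v Pv (proj v).2
    rw [← inner_conj_symm, h0, map_zero]
  have hpyth : ‖Pv‖ ^ 2 + ‖q‖ ^ 2 = ‖v‖ ^ 2 := by
    have := norm_add_sq_eq_norm_sq_add_norm_sq_of_inner_eq_zero Pv q hinner
    have hvq : Pv + q = v := by rw [hq]; abel
    rw [hvq] at this
    linarith
  -- the inner product with w = conj B
  set w : L2 := toL2 (conjLp B) with hw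
  have hwv : ⟪w, v⟫_ℂ = fourierCoeff ((u : L2) : Circle2pi → ℂ) 0 := by
    rw [MeasureTheory.L2.inner_def]
    have hcalc : (fun x => ⟪(w : Circle2pi → ℂ) x, (v : Circle2pi → ℂ) x⟫_ℂ)
        =ᵐ[haar] ((u : L2) : Circle2pi → ℂ) := by
      filter_upwards [hvcoe, (coeFn_toL2 _).trans (coeFn_conjLp B), hBmod] with x hx hx2 hx3
      rw [RCLike.inner_apply, hx, hx2]
      have h1 : ((B : Circle2pi → ℂ) x) * (starRingEnd ℂ) ((B : Circle2pi → ℂ) x) = 1 := by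
        rw [Complex.mul_conj, Complex.normSq_eq_norm_sq, hx3]
        norm_num
      rw [Complex.conj_conj]
      linear_combination (((u : L2) : Circle2pi → ℂ) x) * h1
    rw [integral_congr_ae hcalc]
    simp [fourierCoeff]
  have hwPv : ⟪w, Pv⟫_ℂ = 0 := inner_conjB_hardy hB hB0 Pv (proj v).2
  have hwq : ⟪w, q⟫_ℂ = fourierCoeff ((u : L2) : Circle2pi → ℂ) 0 := by
    rw [hq, inner_sub_right, hwv, hwPv, sub_zero]
  -- Cauchy-Schwarz
  have hcs : ‖fourierCoeff ((u : L2) : Circle2pi → ℂ) 0‖ ≤ ‖q‖ := by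
    have := norm_inner_le_norm (𝕜 := ℂ) w q
    rw [hwq, norm_toL2_conj_one hBmod, one_mul] at this
    exact this
  have hq2 : ‖fourierCoeff ((u : L2) : Circle2pi → ℂ) 0‖ ^ 2 ≤ ‖q‖ ^ 2 :=
    pow_le_pow_left₀ (norm_nonneg _) hcs 2
  rw [hT]
  have : ‖Pv‖ ^ 2 = ‖v‖ ^ 2 - ‖q‖ ^ 2 := by linarith
  rw [← hPv] at *
  rw [this, hvnorm]
  linarith

end Aux

/-- If `k = ∑ λⱼ Bⱼ` is a finite convex combination of inner functions
vanishing at `0`, then for every `u ∈ H²`, `‖u‖² - ‖T_{k̄} u‖² ≥ |u(0)|²`. -/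
theorem convex_combination_bound (l : ℕ) (lam : Fin l → ℝ) (B : Fin l → Linf)
    (hlam0 : ∀ j, 0 ≤ lam j) (hlam1 : ∀ j, lam j ≤ 1) (hsum : ∑ j, lam j = 1)
    (hB : ∀ j, MemHinf (B j))
    (hBmod : ∀ j, ∀ᵐ θ ∂haar, ‖(B j : Circle2pi → ℂ) θ‖ = 1)
    (hB0 : ∀ j, fourierCoeff (B j : Circle2pi → ℂ) 0 = 0)
    (k : Linf) (hk : k = ∑ j, (lam j : ℂ) • B j) :
    ∀ u : Hardy,
      ‖(u : L2)‖ ^ 2 - ‖((Toeplitz (conjLp k) u : Hardy) : L2)‖ ^ 2 ≥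
        ‖fourierCoeff ((u : L2) : Circle2pi → ℂ) 0‖ ^ 2 := by
  intro u
  set c := ‖fourierCoeff ((u : L2) : Circle2pi → ℂ) 0‖ with hc
  have hkey : ∀ j, ‖((Toeplitz (conjLp (B j)) u : Hardy) : L2)‖ ^ 2 ≤ ‖(u : L2)‖ ^ 2 - c ^ 2 :=
    fun j => key_single (B j) (hB j) (hBmod j) (hB0 j) u
  -- decomposition of the multiplication operator
  have hmul : mulL (conjLp k) (u : L2) = ∑ j, (lam j : ℂ) • mulL (conjLp (B j)) (u : L2) := by
    apply Lp.ext
    have hk1 : ((k : Linf) : Circle2pi → ℂ) =ᵐ[haar]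
        fun x => ∑ j, (lam j : ℂ) * (B j : Circle2pi → ℂ) x := by
      rw [hk]
      refine (Lp_coeFn_sum Finset.univ _).trans ?_
      have hsm : ∀ᵐ x ∂haar, ∀ j : Fin l,
          (((lam j : ℂ) • B j : Linf) : Circle2pi → ℂ) x
            = (lam j : ℂ) * (B j : Circle2pi → ℂ) x := by
        rw [ae_all_iff]
        intro j
        filter_upwards [Lp.coeFn_smul (lam j : ℂ) (B j)] with x hx
        rw [hx]; simp
      filter_upwards [hsm] with x hx
      exact Finset.sum_congr rfl fun j _ => hx j
    have hlhs : ((mulL (conjLp k) (u : L2) : L2) : Circle2pi → ℂ) =ᵐ[haar]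
        fun x => (∑ j, (lam j : ℂ) * (starRingEnd ℂ) ((B j : Circle2pi → ℂ) x))
          * ((u : L2) : Circle2pi → ℂ) x := by
      filter_upwards [coeFn_mulL (conjLp k) (u : L2), coeFn_conjLp k, hk1] with x hx hx2 hx3
      rw [hx, hx2, hx3]
      congr 1
      rw [map_sum]
      refine Finset.sum_congr rfl fun j _ => ?_
      rw [map_mul, Complex.conj_ofReal]
    have hrhs : ((∑ j, (lam j : ℂ) • mulL (conjLp (B j)) (u : L2) : L2) : Circle2pi → ℂ)
        =ᵐ[haar] fun x => ∑ j, (lam j : ℂ) *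
          ((starRingEnd ℂ) ((B j : Circle2pi → ℂ) x) * ((u : L2) : Circle2pi → ℂ) x) := by
      refine (Lp_coeFn_sum Finset.univ _).trans ?_
      have hsm : ∀ᵐ x ∂haar, ∀ j : Fin l,
          (((lam j : ℂ) • mulL (conjLp (B j)) (u : L2) : L2) : Circle2pi → ℂ) x
            = (lam j : ℂ) * ((starRingEnd ℂ) ((B j : Circle2pi → ℂ) x)
              * ((u : L2) : Circle2pi → ℂ) x) := by
        rw [ae_all_iff]
        intro j
        filter_upwards [Lp.coeFn_smul (lam j : ℂ) (mulL (conjLp (B j)) (u : L2)),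
          coeFn_mulL (conjLp (B j)) (u : L2), coeFn_conjLp (B j)] with x hx hx2 hx3
        rw [hx, Pi.smul_apply, hx2, hx3, smul_eq_mul]
      filter_upwards [hsm] with x hx
      exact Finset.sum_congr rfl fun j _ => hx j
    filter_upwards [hlhs, hrhs] with x hx hx2
    rw [hx, hx2, Finset.sum_mul]
    exact Finset.sum_congr rfl fun j _ => by ring
  -- decomposition of the Toeplitz operator applied to u
  have hTdecomp : ((Toeplitz (conjLp k) u : Hardy) : L2)
      = ∑ j, (lam j : ℂ) • ((Toeplitz (conjLp (B j)) u : Hardy) : L2) := by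
    have h1 : Toeplitz (conjLp k) u = proj (mulL (conjLp k) (u : L2)) := rfl
    rw [h1, hmul, map_sum]
    simp only [_root_.map_smul]
    push_cast
    rfl
  set a : Fin l → ℝ := fun j => ‖((Toeplitz (conjLp (B j)) u : Hardy) : L2)‖ with ha
  have hnormle : ‖((Toeplitz (conjLp k) u : Hardy) : L2)‖ ≤ ∑ j, lam j * a j := by
    rw [hTdecomp]
    refine (norm_sum_le _ _).trans ?_
    refine Finset.sum_le_sum fun j _ => ?_
    rw [norm_smul, Complex.norm_real, Real.norm_eq_abs, _root_.abs_of_nonneg (hlam0 j)]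
  have hcs : (∑ j, lam j * a j) ^ 2 ≤ ∑ j, lam j * a j ^ 2 := by
    have h := Finset.sum_mul_sq_le_sq_mul_sq Finset.univ
      (fun j => Real.sqrt (lam j)) (fun j => Real.sqrt (lam j) * a j)
    have h1 : ∀ j : Fin l, Real.sqrt (lam j) * (Real.sqrt (lam j) * a j) = lam j * a j :=
      fun j => by rw [← mul_assoc, Real.mul_self_sqrt (hlam0 j)]
    have h3 : ∀ j : Fin l, (Real.sqrt (lam j) * a j) ^ 2 = lam j * a j ^ 2 :=
      fun j => by rw [mul_pow, Real.sq_sqrt (hlam0 j)]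
    simp only [h1, h3, Real.sq_sqrt (hlam0 _)] at h
    rwa [hsum, one_mul] at h
  have hfinal : ∑ j, lam j * a j ^ 2 ≤ ‖(u : L2)‖ ^ 2 - c ^ 2 := by
    calc ∑ j, lam j * a j ^ 2 ≤ ∑ j, lam j * (‖(u : L2)‖ ^ 2 - c ^ 2) :=
          Finset.sum_le_sum fun j _ => mul_le_mul_of_nonneg_left (hkey j) (hlam0 j)
      _ = ‖(u : L2)‖ ^ 2 - c ^ 2 := by rw [← Finset.sum_mul, hsum, one_mul]
  have hTsq : ‖((Toeplitz (conjLp k) u : Hardy) : L2)‖ ^ 2 ≤ (∑ j, lam j * a j) ^ 2 :=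
    pow_le_pow_left₀ (norm_nonneg _) hnormle 2
  linarith

end SpectralArea
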